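/- arXiv:1706.05040 — 4 statements merged into one kernel-verified Lean document; each statement's English description precedes it below -/
import Mathlib

section
/- For nonnegative reals a, b and any positive integer m, (a^{1/2} b^{1/2})^m + (1/2)^m (a^{m/2} - b^{m/2})^2 ≤ 2^{-m} (a + b)^m. -/
/-!
Put `x = √a` and `y = √b`. Multiplying by `2 ^ m`, the inequality becomes
`(2xy)^m + (x^m - y^m)^2 ≤ (x^2 + y^2)^m`, which is proved by induction on `m`: multiplying the
case `m` by `x^2 + y^2` overshoots the case `m + 1` by exactly
`(2^m - 2) (xy)^m (x - y)^2 + (x^m y - x y^m)^2 ≥ 0`.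
-/

section

variable {R : Type*} [CommRing R] [LinearOrder R] [IsStrictOrderedRing R]

theorem two_mul_mul_pow_add_sq_pow_sub_pow_le {x y : R} (hxy : 0 ≤ x * y) (m : ℕ) :
    (2 * x * y) ^ m + (x ^ m - y ^ m) ^ 2 ≤ (x ^ 2 + y ^ 2) ^ m := by
  rcases Nat.eq_zero_or_pos m with rfl | hm
  · simp
  induction m, hm using Nat.le_induction with
  | base => exact le_of_eq (by ring)
  | succ m hm ih =>
    have h2 : (2 : R) ≤ 2 ^ m := le_self_pow₀ one_le_two (by omega)
    have hmul := mul_le_mul_of_nonneg_right ih (add_nonneg (sq_nonneg x) (sq_nonneg y))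
    have hgap : 0 ≤ (2 ^ m - 2) * (x * y) ^ m * (x - y) ^ 2 :=
      mul_nonneg (mul_nonneg (sub_nonneg.2 h2) (pow_nonneg hxy m)) (sq_nonneg _)
    have hsq := sq_nonneg (x ^ m * y - x * y ^ m)
    have hexpand : ((2 * x * y) ^ m + (x ^ m - y ^ m) ^ 2) * (x ^ 2 + y ^ 2)
        = (2 * x * y) ^ (m + 1) + (x ^ (m + 1) - y ^ (m + 1)) ^ 2
          + (2 ^ m - 2) * (x * y) ^ m * (x - y) ^ 2 + (x ^ m * y - x * y ^ m) ^ 2 := by ring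
    rw [pow_succ (x ^ 2 + y ^ 2)]
    linarith

end

theorem young_type_refinement_half_general (a b : ℝ) (ha : 0 ≤ a) (hb : 0 ≤ b)
    (m : ℕ) :
    (a ^ ((1 : ℝ) / 2) * b ^ ((1 : ℝ) / 2)) ^ m
        + (1 / 2 : ℝ) ^ m * (a ^ ((m : ℝ) / 2) - b ^ ((m : ℝ) / 2)) ^ 2
      ≤ (1 / 2 : ℝ) ^ m * (a + b) ^ m := by
  rw [← Real.sqrt_eq_rpow, ← Real.sqrt_eq_rpow, Real.rpow_div_two_eq_sqrt _ ha,
    Real.rpow_div_two_eq_sqrt _ hb, Real.rpow_natCast, Real.rpow_natCast]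
  have key := two_mul_mul_pow_add_sq_pow_sub_pow_le
    (mul_nonneg (Real.sqrt_nonneg a) (Real.sqrt_nonneg b)) m
  rw [Real.sq_sqrt ha, Real.sq_sqrt hb] at key
  calc (√a * √b) ^ m + (1 / 2) ^ m * (√a ^ m - √b ^ m) ^ 2
      = (1 / 2) ^ m * ((2 * √a * √b) ^ m + (√a ^ m - √b ^ m) ^ 2) := by
        rw [mul_add, ← mul_pow]; ring
    _ ≤ (1 / 2) ^ m * (a + b) ^ m := by gcongr

theorem young_type_refinement_half (a b : ℝ) (ha : 0 ≤ a) (hb : 0 ≤ b)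
    (m : ℕ) (hm : 0 < m) :
    (a ^ ((1 : ℝ) / 2) * b ^ ((1 : ℝ) / 2)) ^ m
        + (1 / 2 : ℝ) ^ m * (a ^ ((m : ℝ) / 2) - b ^ ((m : ℝ) / 2)) ^ 2
      ≤ (1 / 2 : ℝ) ^ m * (a + b) ^ m :=
  young_type_refinement_half_general a b ha hb m
end

section
/- For nonnegative reals a, b, exponents p, q > 1 with 1/p + 1/q = 1, r₀ = min(1/p, 1/q), and any positive integer m, one has (a^{1/p} b^{1/q})^m + r₀^m (a^{m/2} - b^{m/2})^2 ≤ (a/p + b/q)^m. -/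
/-!
Write `u = √a`, `v = √b`, `r = r₀`, `x = a^{1/p} b^{1/q}` and `A = a/p + b/q`. For `m = 1` the
inequality `x + r (u - v)² ≤ A` is weighted AM-GM applied to `b` and `√(ab)` with weights
`1/q - 1/p` and `2/p` (when `p ≥ q`). Put `g = 2ruv` and `d = r (u - v)²`, so that `x + d ≤ A` and
`g + d = r (a + b) ≤ A`. Expanding `(u² + v²)^m` gives `(u^m - v^m)² + (2uv)^m ≤ (u² + v²)^m`, hence
`r^m (u^m - v^m)² ≤ (g + d)^m - g^m`, and `t ↦ (t + d)^m - t^m` is increasing on `t ≥ 0`, so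
`(g + d)^m - g^m ≤ A^m - x^m` (directly when `x ≤ g`).
-/

open Real

lemma pow_add_sub_pow_le_pow_add_sub_pow {x y d : ℝ} (hx : 0 ≤ x) (hxy : x ≤ y) (hd : 0 ≤ d)
    (m : ℕ) : (x + d) ^ m - x ^ m ≤ (y + d) ^ m - y ^ m := by
  have hy : 0 ≤ y := hx.trans hxy
  rw [← geom_sum₂_mul, ← geom_sum₂_mul, add_sub_cancel_left, add_sub_cancel_left]
  gcongr

lemma pow_add_pow_add_le_pow_add_pow {x g d s : ℝ} (hx : 0 ≤ x) (hg : 0 ≤ g) (hd : 0 ≤ d)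
    (hxs : x + d ≤ s) (hgs : g + d ≤ s) (m : ℕ) :
    x ^ m + (g + d) ^ m ≤ s ^ m + g ^ m := by
  rcases le_total x g with hxg | hgx
  · have := pow_le_pow_left₀ hx hxg m
    have := pow_le_pow_left₀ (add_nonneg hg hd) hgs m
    linarith
  · have := pow_add_sub_pow_le_pow_add_sub_pow hg hgx hd m
    have := pow_le_pow_left₀ (add_nonneg hx hd) hxs m
    linarith

lemma pow_sub_pow_sq_add_two_mul_pow_le {u v : ℝ} (hu : 0 ≤ u) (hv : 0 ≤ v) (m : ℕ) :
    (u ^ m - v ^ m) ^ 2 + (2 * u * v) ^ m ≤ (u ^ 2 + v ^ 2) ^ m := by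
  induction m with
  | zero => norm_num
  | succ n ih =>
    have step : (u ^ (n + 1) - v ^ (n + 1)) ^ 2 + (2 * u * v) ^ (n + 1)
        ≤ (u ^ 2 + v ^ 2) * ((u ^ n - v ^ n) ^ 2 + (2 * u * v) ^ n) := by
      rcases Nat.eq_zero_or_pos n with rfl | hn
      · simpa using le_of_eq (by ring)
      · have h2 : (2 : ℝ) ≤ 2 ^ n := by
          simpa using pow_le_pow_right₀ (by norm_num : (1 : ℝ) ≤ 2) hn
        have hgap : (u ^ 2 + v ^ 2) * ((u ^ n - v ^ n) ^ 2 + (2 * u * v) ^ n)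
            - ((u ^ (n + 1) - v ^ (n + 1)) ^ 2 + (2 * u * v) ^ (n + 1))
            = (u * v ^ n - v * u ^ n) ^ 2 + (2 ^ n - 2) * (u * v) ^ n * (u - v) ^ 2 := by ring
        have : 0 ≤ (2 ^ n - 2) * (u * v) ^ n * (u - v) ^ 2 := by
          have : 0 ≤ (u * v) ^ n := by positivity
          positivity
        linarith [sq_nonneg (u * v ^ n - v * u ^ n)]
    calc _ ≤ _ := step
      _ ≤ (u ^ 2 + v ^ 2) * (u ^ 2 + v ^ 2) ^ n := by gcongr
      _ = (u ^ 2 + v ^ 2) ^ (n + 1) := by ring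

lemma geom_mean_add_min_mul_sub_sqrt_sq_le_arith_mean2_weighted {a b w₁ w₂ : ℝ}
    (ha : 0 ≤ a) (hb : 0 ≤ b) (hw₁ : 0 ≤ w₁) (hw₂ : 0 ≤ w₂) (hw : w₁ + w₂ = 1) :
    a ^ w₁ * b ^ w₂ + min w₁ w₂ * (√a - √b) ^ 2 ≤ w₁ * a + w₂ * b := by
  wlog h : w₁ ≤ w₂ generalizing a b w₁ w₂
  · have := this hb ha hw₂ hw₁ (by linarith) (by linarith)
    rw [min_comm, ← sq_abs, abs_sub_comm, sq_abs]
    linarith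
  rw [min_eq_left h]
  have amgm := geom_mean_le_arith_mean2_weighted (sub_nonneg.2 h) (by positivity : 0 ≤ 2 * w₁)
    hb (by positivity : 0 ≤ √a * √b) (by linarith)
  have hgeom : b ^ (w₂ - w₁) * (√a * √b) ^ (2 * w₁) = a ^ w₁ * b ^ w₂ := by
    rw [← sqrt_mul ha, sqrt_eq_rpow, ← rpow_mul (mul_nonneg ha hb),
      show 1 / 2 * (2 * w₁) = w₁ by ring, mul_rpow ha hb, mul_left_comm,
      ← rpow_add' hb (by linarith), sub_add_cancel]
  have hsplit : w₁ * a + w₂ * b = (w₂ - w₁) * b + 2 * w₁ * (√a * √b) + w₁ * (√a - √b) ^ 2 := by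
    rw [sub_sq, sq_sqrt ha, sq_sqrt hb]
    ring
  linarith

theorem young_refinement_pq_general (a b p q : ℝ) (ha : 0 ≤ a) (hb : 0 ≤ b)
    (hp : 1 < p) (hq : 1 < q) (hpq : 1 / p + 1 / q = 1) (m : ℕ) :
    (a ^ (1 / p) * b ^ (1 / q)) ^ m
        + (min (1 / p) (1 / q)) ^ m * (a ^ ((m : ℝ) / 2) - b ^ ((m : ℝ) / 2)) ^ 2
      ≤ (a / p + b / q) ^ m := by
  have half_pow {c : ℝ} (hc : 0 ≤ c) : c ^ ((m : ℝ) / 2) = √c ^ m := by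
    rw [div_eq_inv_mul, rpow_mul_natCast hc, sqrt_eq_rpow, one_div]
  rw [half_pow ha, half_pow hb]
  set r := min (1 / p) (1 / q)
  have hr : 0 ≤ r := le_min (by positivity) (by positivity)
  have hyoung : a ^ (1 / p) * b ^ (1 / q) + r * (√a - √b) ^ 2 ≤ a / p + b / q := by
    simpa only [one_div_mul_eq_div] using geom_mean_add_min_mul_sub_sqrt_sq_le_arith_mean2_weighted
      ha hb (by positivity) (by positivity) hpq
  have hsum : 2 * √a * √b + (√a - √b) ^ 2 = a + b := by
    rw [sub_sq, sq_sqrt ha, sq_sqrt hb]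
    ring
  have hmean : r * (2 * √a * √b) + r * (√a - √b) ^ 2 ≤ a / p + b / q := by
    rw [← mul_add, hsum, mul_add, ← one_div_mul_eq_div p a, ← one_div_mul_eq_div q b]
    gcongr
    exacts [min_le_left _ _, min_le_right _ _]
  have hpow := pow_add_pow_add_le_pow_add_pow (by positivity) (by positivity) (by positivity)
    hyoung hmean m
  have hsq := mul_le_mul_of_nonneg_left
    (pow_sub_pow_sq_add_two_mul_pow_le (sqrt_nonneg a) (sqrt_nonneg b) m) (pow_nonneg hr m)
  rw [← mul_add, hsum, mul_pow r, mul_pow r] at hpow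
  rw [sq_sqrt ha, sq_sqrt hb, mul_add] at hsq
  linarith

theorem young_refinement_pq (a b p q : ℝ) (ha : 0 ≤ a) (hb : 0 ≤ b)
    (hp : 1 < p) (hq : 1 < q) (hpq : 1 / p + 1 / q = 1) (m : ℕ) (hm : 0 < m) :
    (a ^ (1 / p) * b ^ (1 / q)) ^ m
        + (min (1 / p) (1 / q)) ^ m * (a ^ ((m : ℝ) / 2) - b ^ ((m : ℝ) / 2)) ^ 2
      ≤ (a / p + b / q) ^ m :=
  young_refinement_pq_general a b p q ha hb hp hq hpq m
end

section
/- Let T be a positive bounded linear operator on a complex Hilbert space H, x ∈ H a unit vector, and 0 < r ≤ 1. Then ⟨T^r x, x⟩ ≤ ⟨Tx, x⟩^r. -/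
noncomputable section
open ContinuousLinearMap

/-- The numerical radius of a bounded operator on a complex Hilbert space. -/
def numRadius {H : Type*} [NormedAddCommGroup H] [InnerProductSpace ℂ H]
    (T : H →L[ℂ] H) : ℝ :=
  sSup {r | ∃ x : H, ‖x‖ = 1 ∧ r = ‖(inner ℂ (T x) x : ℂ)‖}

/-- The block operator `[[A, B], [C, D]]` on the Hilbert space direct sum `H₁ ⊕ H₂`. -/
def blockOp {H₁ H₂ : Type*} [NormedAddCommGroup H₁] [InnerProductSpace ℂ H₁]
    [NormedAddCommGroup H₂] [InnerProductSpace ℂ H₂]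
    (A : H₁ →L[ℂ] H₁) (B : H₂ →L[ℂ] H₁) (C : H₁ →L[ℂ] H₂) (D : H₂ →L[ℂ] H₂) :
    WithLp 2 (H₁ × H₂) →L[ℂ] WithLp 2 (H₁ × H₂) :=
  (((WithLp.prodContinuousLinearEquiv 2 ℂ H₁ H₂).symm :
      (H₁ × H₂) →L[ℂ] WithLp 2 (H₁ × H₂))).comp
    (((A.comp (fst ℂ H₁ H₂) + B.comp (snd ℂ H₁ H₂)).prod
        (C.comp (fst ℂ H₁ H₂) + D.comp (snd ℂ H₁ H₂))).comp
      ((WithLp.prodContinuousLinearEquiv 2 ℂ H₁ H₂ :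
        WithLp 2 (H₁ × H₂) →L[ℂ] (H₁ × H₂))))

/-- The absolute value `|B| = (B*B)^{1/2}` of an operator between Hilbert spaces. -/
def absOp {E F : Type*} [NormedAddCommGroup E] [InnerProductSpace ℂ E] [CompleteSpace E]
    [NormedAddCommGroup F] [InnerProductSpace ℂ F] [CompleteSpace F]
    (B : E →L[ℂ] F) : E →L[ℂ] E :=
  CFC.sqrt ((ContinuousLinearMap.adjoint B).comp B)

variable {H : Type*} [NormedAddCommGroup H] [InnerProductSpace ℂ H] [CompleteSpace H]

/-! By the weighted AM–GM inequality, `t ^ r * b ^ (1 - r) ≤ r * t + (1 - r) * b` for all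
`t, b ≥ 0`. Applied to `t` in the spectrum of `T`, the functional calculus turns this into the
operator inequality `b ^ (1 - r) • T ^ r ≤ r • T + (1 - r) • 1`, and pairing with the unit
vector `x` gives `b ^ (1 - r) ⟪T ^ r x, x⟫ ≤ r ⟪T x, x⟫ + (1 - r) b`. For every `b > ⟪T x, x⟫`
the right-hand side is at most `b`, so `⟪T ^ r x, x⟫ ≤ b ^ r`; letting `b` decrease to
`⟪T x, x⟫` gives the claim. -/

namespace ContinuousLinearMap

theorem re_inner_le_re_inner_of_le {𝕜 E : Type*} [RCLike 𝕜] [NormedAddCommGroup E]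
    [InnerProductSpace 𝕜 E] {A B : E →L[𝕜] E} (h : A ≤ B) (x : E) :
    RCLike.re (inner 𝕜 (A x) x) ≤ RCLike.re (inner 𝕜 (B x) x) := by
  simpa [inner_sub_left] using ((le_def A B).mp h).re_inner_nonneg_left x

end ContinuousLinearMap

theorem re_inner_cfc_mul_add (T : H →L[ℂ] H) (hT : IsSelfAdjoint T) (m c : ℝ) (x : H) :
    (inner ℂ ((cfc (fun t : ℝ => m * t + c) T) x) x : ℂ).re
      = m * (inner ℂ (T x) x : ℂ).re + c * ‖x‖ ^ 2 := by
  rw [cfc_add_const c _ T, cfc_const_mul m _ T, cfc_id' ℝ T]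
  simp [Algebra.algebraMap_eq_smul_one, ← Complex.ofReal_pow]

theorem rpow_mul_re_inner_cfc_rpow_le (T : H →L[ℂ] H) (hT : 0 ≤ T) {r : ℝ} (hr0 : 0 ≤ r)
    (hr1 : r ≤ 1) {b : ℝ} (hb : 0 ≤ b) {x : H} (hx : ‖x‖ = 1) :
    b ^ (1 - r) * (inner ℂ ((cfc (fun t : ℝ => t ^ r) T) x) x : ℂ).re
      ≤ r * (inner ℂ (T x) x : ℂ).re + (1 - r) * b := by
  have hmono : cfc (fun t : ℝ => b ^ (1 - r) * t ^ r) T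
      ≤ cfc (fun t : ℝ => r * t + (1 - r) * b) T :=
    cfc_mono fun t ht => by
      rw [mul_comm]
      exact Real.geom_mean_le_arith_mean2_weighted hr0 (by linarith)
        (spectrum_nonneg_of_nonneg hT ht) hb (by ring)
  have hinner : (inner ℂ ((cfc (fun t : ℝ => b ^ (1 - r) * t ^ r) T) x) x : ℂ).re
      ≤ (inner ℂ ((cfc (fun t : ℝ => r * t + (1 - r) * b) T) x) x : ℂ).re :=
    re_inner_le_re_inner_of_le hmono x
  rw [cfc_const_mul _ _ T, re_inner_cfc_mul_add T hT.isSelfAdjoint, hx] at hinner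
  simpa [inner_smul_real_left] using hinner

theorem mccarthy_le_one (T : H →L[ℂ] H) (hT : 0 ≤ T) (x : H) (hx : ‖x‖ = 1)
    (r : ℝ) (hr0 : 0 < r) (hr1 : r ≤ 1) :
    (inner ℂ ((cfc (fun t : ℝ => t ^ r) T) x) x : ℂ).re ≤ (inner ℂ (T x) x : ℂ).re ^ r := by
  set a := (inner ℂ (T x) x : ℂ).re
  have ha : 0 ≤ a := ((nonneg_iff_isPositive T).mp hT).re_inner_nonneg_left x
  have above : ∀ b > a, (inner ℂ ((cfc (fun t : ℝ => t ^ r) T) x) x : ℂ).re ≤ b ^ r := by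
    intro b hab
    have hb : 0 < b := ha.trans_lt hab
    refine le_of_mul_le_mul_left ?_ (Real.rpow_pos_of_pos hb (1 - r))
    calc b ^ (1 - r) * _ ≤ r * a + (1 - r) * b :=
          rpow_mul_re_inner_cfc_rpow_le T hT hr0.le hr1 hb.le hx
      _ ≤ b := by nlinarith
      _ = b ^ (1 - r) * b ^ r := by rw [← Real.rpow_add hb, sub_add_cancel, Real.rpow_one]
  have hcont : ContinuousAt (fun b : ℝ => b ^ r) a :=
    Real.continuousAt_rpow_const a r (.inr hr0.le)
  exact ge_of_tendsto (hcont.tendsto.mono_left nhdsWithin_le_nhds)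
    (eventually_nhdsWithin_of_forall (s := Set.Ioi a) above)
end
end

section
/- For B ∈ B(H₂, H₁) and C ∈ B(H₁, H₂), the numerical radius of T = [[0, B], [C, 0]] satisfies w(T) = (1/2) · sup over θ ∈ ℝ of ‖e^{iθ} B + e^{−iθ} C*‖. -/
/-!
Write `x = (x₁, x₂)` and `D_θ = e^{iθ} B + e^{-iθ} C*` (`phaseSum B C θ`). Then
`⟪T x, x⟫ = ⟪B x₂, x₁⟫ + ⟪C x₁, x₂⟫`, and for every `θ`,
`Re (e^{-iθ} ⟪T x, x⟫) = Re ⟪x₁, D_θ x₂⟫`.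
Taking `θ = arg ⟪T x, x⟫` gives `|⟪T x, x⟫| ≤ ‖D_θ‖ ‖x₁‖ ‖x₂‖ ≤ ‖D_θ‖ / 2` for a unit vector `x`.
Conversely `Re ⟪u, D_θ v⟫ ≤ w(T) (‖u‖² + ‖v‖²)` for all `u, v`, and testing this with `u` a
positive multiple of `D_θ v` of the same norm as `v` gives `‖D_θ‖ ≤ 2 w(T)`.
-/

noncomputable section
open ContinuousLinearMap

variable {H₁ H₂ : Type*} [NormedAddCommGroup H₁] [InnerProductSpace ℂ H₁] [CompleteSpace H₁]
  [NormedAddCommGroup H₂] [InnerProductSpace ℂ H₂] [CompleteSpace H₂]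

section NumRadius

variable {H : Type*} [NormedAddCommGroup H] [InnerProductSpace ℂ H]

lemma numRadius_nonneg (T : H →L[ℂ] H) : 0 ≤ numRadius T :=
  Real.sSup_nonneg fun _ ⟨_, _, hr⟩ => hr ▸ norm_nonneg _

lemma bddAbove_numRange_norm (T : H →L[ℂ] H) :
    BddAbove {r | ∃ x : H, ‖x‖ = 1 ∧ r = ‖(inner ℂ (T x) x : ℂ)‖} := by
  refine ⟨‖T‖, ?_⟩
  rintro _ ⟨x, hx, rfl⟩
  calc ‖(inner ℂ (T x) x : ℂ)‖ ≤ ‖T x‖ * ‖x‖ := norm_inner_le_norm _ _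
    _ ≤ ‖T‖ * ‖x‖ * ‖x‖ := by gcongr; exact T.le_opNorm x
    _ = ‖T‖ := by rw [hx, mul_one, mul_one]

lemma norm_inner_self_le_numRadius (T : H →L[ℂ] H) {x : H} (hx : ‖x‖ = 1) :
    ‖(inner ℂ (T x) x : ℂ)‖ ≤ numRadius T :=
  le_csSup (bddAbove_numRange_norm T) ⟨x, hx, rfl⟩

lemma norm_inner_self_le_numRadius_mul_sq (T : H →L[ℂ] H) (x : H) :
    ‖(inner ℂ (T x) x : ℂ)‖ ≤ numRadius T * ‖x‖ ^ 2 := by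
  rcases eq_or_ne x 0 with rfl | hx
  · simp
  have hunit := norm_inner_self_le_numRadius T (norm_smul_inv_norm (𝕜 := ℂ) hx)
  simp only [map_smul, inner_smul_left, inner_smul_right, norm_mul, RCLike.norm_conj, norm_inv,
    RCLike.norm_ofReal, abs_norm] at hunit
  have hpos : 0 < ‖x‖ := norm_pos_iff.mpr hx
  calc ‖(inner ℂ (T x) x : ℂ)‖ = ‖x‖ ^ 2 * (‖x‖⁻¹ * (‖x‖⁻¹ * ‖(inner ℂ (T x) x : ℂ)‖)) := by
        field_simp
    _ ≤ ‖x‖ ^ 2 * numRadius T := by gcongr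
    _ = numRadius T * ‖x‖ ^ 2 := mul_comm _ _

lemma numRadius_le_of_forall {T : H →L[ℂ] H} {c : ℝ} (hc : 0 ≤ c)
    (h : ∀ x : H, ‖x‖ = 1 → ‖(inner ℂ (T x) x : ℂ)‖ ≤ c) : numRadius T ≤ c :=
  Real.sSup_le (fun _ ⟨x, hx, hr⟩ => hr ▸ h x hx) hc

end NumRadius

lemma Complex.re_exp_neg_arg_mul_I_mul (z : ℂ) : (exp (-z.arg * I) * z).re = ‖z‖ := by
  nth_rewrite 2 [← norm_mul_exp_arg_mul_I z]
  rw [mul_left_comm, ← exp_add, neg_mul, neg_add_cancel, exp_zero, mul_one, ofReal_re]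

lemma ContinuousLinearMap.opNorm_le_two_mul_of_re_inner_le {𝕜 E F : Type*} [RCLike 𝕜]
    [NormedAddCommGroup E] [InnerProductSpace 𝕜 E] [NormedAddCommGroup F] [InnerProductSpace 𝕜 F]
    (D : F →L[𝕜] E) {c : ℝ} (hc : 0 ≤ c)
    (h : ∀ u v, RCLike.re (inner 𝕜 u (D v)) ≤ c * (‖u‖ ^ 2 + ‖v‖ ^ 2)) : ‖D‖ ≤ 2 * c := by
  refine D.opNorm_le_bound (by positivity) fun v => ?_
  rcases eq_or_ne (D v) 0 with hDv | hDv
  · rw [hDv, norm_zero]; positivity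
  have hpos : 0 < ‖D v‖ := norm_pos_iff.mpr hDv
  have htest := h (((‖v‖ / ‖D v‖ : ℝ) : 𝕜) • D v) v
  rw [inner_smul_left, RCLike.conj_ofReal, RCLike.re_ofReal_mul, inner_self_eq_norm_sq,
    norm_smul, RCLike.norm_ofReal, abs_of_nonneg (by positivity), div_mul_cancel₀ _ hpos.ne']
    at htest
  have hv : 0 < ‖v‖ := norm_pos_iff.mpr fun hv => hDv (by rw [hv, map_zero])
  have hcancel : ‖v‖ / ‖D v‖ * ‖D v‖ ^ 2 = ‖v‖ * ‖D v‖ := by field_simp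
  refine le_of_mul_le_mul_left ?_ hv
  linarith

lemma inner_blockOp_apply_self {E F : Type*} [NormedAddCommGroup E] [InnerProductSpace ℂ E]
    [NormedAddCommGroup F] [InnerProductSpace ℂ F] (A : E →L[ℂ] E) (B : F →L[ℂ] E)
    (C : E →L[ℂ] F) (D : F →L[ℂ] F) (x : WithLp 2 (E × F)) :
    (inner ℂ (blockOp A B C D x) x : ℂ)
      = inner ℂ (A x.fst + B x.snd) x.fst + inner ℂ (C x.fst + D x.snd) x.snd :=
  rfl

def phaseSum (B : H₂ →L[ℂ] H₁) (C : H₁ →L[ℂ] H₂) (θ : ℝ) : H₂ →L[ℂ] H₁ :=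
  Complex.exp (θ * Complex.I) • B + Complex.exp (-θ * Complex.I) • adjoint C

lemma re_exp_mul_inner_blockOp_offDiag (B : H₂ →L[ℂ] H₁) (C : H₁ →L[ℂ] H₂) (θ : ℝ)
    (x : WithLp 2 (H₁ × H₂)) :
    (Complex.exp (-θ * Complex.I) * inner ℂ (blockOp 0 B C 0 x) x).re
      = (inner ℂ x.fst (phaseSum B C θ x.snd) : ℂ).re := by
  have hconj : Complex.exp (θ * Complex.I) * inner ℂ x.fst (B x.snd)
      = starRingEnd ℂ (Complex.exp (-θ * Complex.I) * inner ℂ (B x.snd) x.fst) := by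
    rw [map_mul, inner_conj_symm, ← Complex.exp_conj]
    congr 2
    simp
  rw [inner_blockOp_apply_self, zero_apply, zero_apply, zero_add, add_zero, phaseSum, add_apply,
    smul_apply, smul_apply, inner_add_right, inner_smul_right, inner_smul_right,
    adjoint_inner_right, hconj, mul_add, Complex.add_re, Complex.add_re, Complex.conj_re]

lemma norm_phaseSum_le_two_mul_numRadius (B : H₂ →L[ℂ] H₁) (C : H₁ →L[ℂ] H₂) (θ : ℝ) :
    ‖phaseSum B C θ‖ ≤ 2 * numRadius (blockOp 0 B C 0) := by
  refine opNorm_le_two_mul_of_re_inner_le _ (numRadius_nonneg _) fun u v => ?_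
  set x : WithLp 2 (H₁ × H₂) := WithLp.toLp 2 (u, v)
  calc (inner ℂ u (phaseSum B C θ v) : ℂ).re
      = (Complex.exp (-θ * Complex.I) * inner ℂ (blockOp 0 B C 0 x) x).re :=
        (re_exp_mul_inner_blockOp_offDiag B C θ x).symm
    _ ≤ ‖(inner ℂ (blockOp 0 B C 0 x) x : ℂ)‖ := by
        refine (Complex.re_le_norm _).trans_eq ?_
        rw [norm_mul, ← Complex.ofReal_neg, Complex.norm_exp_ofReal_mul_I, one_mul]
    _ ≤ numRadius (blockOp 0 B C 0) * ‖x‖ ^ 2 := norm_inner_self_le_numRadius_mul_sq _ x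
    _ = numRadius (blockOp 0 B C 0) * (‖u‖ ^ 2 + ‖v‖ ^ 2) := by
        rw [WithLp.prod_norm_sq_eq_of_L2]; rfl

lemma norm_inner_blockOp_offDiag_le (B : H₂ →L[ℂ] H₁) (C : H₁ →L[ℂ] H₂)
    (x : WithLp 2 (H₁ × H₂)) :
    ‖(inner ℂ (blockOp 0 B C 0 x) x : ℂ)‖
      ≤ ‖phaseSum B C (inner ℂ (blockOp 0 B C 0 x) x : ℂ).arg‖ * ‖x‖ ^ 2 / 2 := by
  set z : ℂ := inner ℂ (blockOp 0 B C 0 x) x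
  set D := phaseSum B C z.arg
  calc ‖z‖ = (inner ℂ x.fst (D x.snd) : ℂ).re :=
        (Complex.re_exp_neg_arg_mul_I_mul z).symm.trans (re_exp_mul_inner_blockOp_offDiag B C _ x)
    _ ≤ ‖x.fst‖ * (‖D‖ * ‖x.snd‖) :=
        (Complex.re_le_norm _).trans <| (norm_inner_le_norm _ _).trans <| by
          gcongr; exact D.le_opNorm _
    _ ≤ ‖D‖ * (‖x.fst‖ ^ 2 + ‖x.snd‖ ^ 2) / 2 := by
        nlinarith [norm_nonneg D, sq_nonneg (‖x.fst‖ - ‖x.snd‖)]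
    _ = ‖D‖ * ‖x‖ ^ 2 / 2 := by rw [WithLp.prod_norm_sq_eq_of_L2]

theorem numRadius_offDiag_sup (B : H₂ →L[ℂ] H₁) (C : H₁ →L[ℂ] H₂) :
    numRadius (blockOp 0 B C 0) =
      (1 / 2) * sSup {r : ℝ | ∃ θ : ℝ,
        r = ‖Complex.exp (θ * Complex.I) • B
              + Complex.exp (-θ * Complex.I) • (ContinuousLinearMap.adjoint C)‖} := by
  change _ = 1 / 2 * sSup {r : ℝ | ∃ θ : ℝ, r = ‖phaseSum B C θ‖}
  set T := blockOp 0 B C 0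
  set S := {r : ℝ | ∃ θ : ℝ, r = ‖phaseSum B C θ‖}
  have hS_le : ∀ r ∈ S, r ≤ 2 * numRadius T := by
    rintro _ ⟨θ, rfl⟩
    exact norm_phaseSum_le_two_mul_numRadius B C θ
  have hsSup_le : sSup S ≤ 2 * numRadius T :=
    Real.sSup_le hS_le (mul_nonneg zero_le_two (numRadius_nonneg T))
  have hle_sSup : numRadius T ≤ sSup S / 2 := by
    refine numRadius_le_of_forall (div_nonneg (Real.sSup_nonneg ?_) zero_le_two) fun x hx => ?_
    · rintro _ ⟨θ, rfl⟩
      exact norm_nonneg _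
    refine (norm_inner_blockOp_offDiag_le B C x).trans ?_
    rw [hx, one_pow, mul_one]
    gcongr
    exact le_csSup ⟨_, hS_le⟩ ⟨_, rfl⟩
  linarith
end
end
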